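/- Let p₀ := 5^{−1/4}. For every p ∈ [−1,1] the functions μ₁, …, μ₅ order as follows: μ₂(p) = max{μ₁(p),…,μ₅(p)} and μ₃(p) = min{μ₁(p),…,μ₅(p)}; moreover, denoting by λ₁(p) ≥ λ₂(p) ≥ λ₃(p) ≥ λ₄(p) ≥ λ₅(p) the values μ₁(p),…,μ₅(p) arranged in non-increasing order, one has: λ₂(p) = μ₄(p) for p ∈ [−1, p₀] and λ₂(p) = μ₁(p) for p ∈ [p₀, 1]; λ₃(p) = μ₅(p) for p ∈ [−1, −p₀], λ₃(p) = μ₁(p) for p ∈ [−p₀, p₀], and λ₃(p) = μ₄(p) for p ∈ [p₀, 1]; λ₄(p) = μ₁(p) for p ∈ [−1, −p₀] and λ₄(p) = μ₅(p) for p ∈ [−p₀, 1]. -/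

import Mathlib

noncomputable section

def mu1 (p : ℝ) : ℝ := 3*p*(p^2+1)/4
def mu2 (p : ℝ) : ℝ := (3*p*(p^2-5) + 6*Real.sqrt (12-3*p^2))/4
def mu3 (p : ℝ) : ℝ := (3*p*(p^2-5) - 6*Real.sqrt (12-3*p^2))/4
def mu4 (p : ℝ) : ℝ :=
  (27*p*(p^2-3) + 3*Real.sqrt (105*p^6-630*p^4+945*p^2+64))/16
def mu5 (p : ℝ) : ℝ :=
  (27*p*(p^2-3) - 3*Real.sqrt (105*p^6-630*p^4+945*p^2+64))/16

/-- `p₀ = 5^{−1/4}`. -/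
def p0 : ℝ := (5 : ℝ) ^ (-(1/4) : ℝ)

/-!
Under `p ↦ -p` the branches transform as `μ₁ ↦ -μ₁`, `μ₂ ↦ -μ₃`, `μ₄ ↦ -μ₅`, so every comparison
involving `μ₃` or `μ₅` mirrors one involving `μ₂` or `μ₄`, with `p₀` mirrored to `-p₀`. The other
comparisons reduce, after isolating a square root and squaring, to polynomial inequalities on
`[-1, 1]`. Writing `D = 105p⁶ - 630p⁴ + 945p² + 64`, one has `16 (μ₄ - μ₁) / 3 = √D - (31p - 5p³)`
and `D - (31p - 5p³)² = 16 (1 - 5p⁴)(4 - p²)`, whose sign changes exactly at `p⁴ = 1/5 = p₀⁴`.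
The comparison `μ₄ ≤ μ₂` needs a second squaring, after which the difference is `(1 - p²)²` times
a quartic in `p²` that is positive on `[0, 1]`. This yields one total order of the five values on
each of `[-1, -p₀]`, `[-p₀, p₀]`, `[p₀, 1]`, and a sorted enumeration is unique.
-/

open Real

theorem Antitone.eq_of_perm_ofFn {α : Type*} [LinearOrder α] {n : ℕ} {f g : Fin n → α}
    (hf : Antitone f) (hg : Antitone g) (h : (List.ofFn f).Perm (List.ofFn g)) : f = g :=
  List.ofFn_injective (h.eq_of_sortedGE hf.sortedGE_ofFn hg.sortedGE_ofFn)

lemma p0_pos : 0 < p0 := rpow_pos_of_pos (by norm_num) _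

lemma p0_pow_four : p0 ^ 4 = 1 / 5 := by
  rw [p0, ← rpow_natCast, ← rpow_mul (by norm_num)]
  norm_num

lemma le_p0_iff {p : ℝ} (hp : 0 ≤ p) : p ≤ p0 ↔ 5 * p ^ 4 ≤ 1 := by
  rw [← pow_le_pow_iff_left₀ hp p0_pos.le four_ne_zero, p0_pow_four]
  constructor <;> intro h <;> linarith

lemma p0_le_iff {p : ℝ} (hp : 0 ≤ p) : p0 ≤ p ↔ 1 ≤ 5 * p ^ 4 := by
  rw [← pow_le_pow_iff_left₀ p0_pos.le hp four_ne_zero, p0_pow_four]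
  constructor <;> intro h <;> linarith

section Branches

variable {p : ℝ}

lemma mu1_neg : mu1 (-p) = -mu1 p := by unfold mu1; ring

lemma mu2_neg : mu2 (-p) = -mu3 p := by unfold mu2 mu3; rw [neg_sq]; ring

lemma mu4_neg : mu4 (-p) = -mu5 p := by
  unfold mu4 mu5
  rw [show (-p) ^ 6 = p ^ 6 by ring, show (-p) ^ 4 = p ^ 4 by ring, neg_sq]
  ring

lemma mu5_le_mu4 : mu5 p ≤ mu4 p := by
  unfold mu4 mu5
  linarith [sqrt_nonneg (105*p^6-630*p^4+945*p^2+64)]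

lemma mu1_le_mu2 (hp : p ≤ 1) : mu1 p ≤ mu2 p := by
  have hs : 3 * p ≤ √(12 - 3*p^2) := by
    rcases le_total p 0 with h | h
    · linarith [sqrt_nonneg (12 - 3*p^2)]
    · exact le_sqrt_of_sq_le (by nlinarith)
  unfold mu1 mu2
  linarith

lemma mu3_le_mu1 (hp : -1 ≤ p) : mu3 p ≤ mu1 p := by
  have := mu1_le_mu2 (p := -p) (by linarith)
  rw [mu1_neg, mu2_neg] at this
  linarith

lemma abs_mul_sqrt_le (hp : p ^ 2 ≤ 1) :
    |p * √(12 - 3*p^2) * (7 - 5*p^2)| ≤ 44 - 68*p^2 + 35*p^4 - 5*p^6 := by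
  have hq : 0 ≤ p ^ 2 := sq_nonneg p
  have hQ : 0 ≤ 1936 - 2700*p^2 + 1355*p^4 - 300*p^6 + 25*p^8 := by
    nlinarith [sq_nonneg (1055*p^2 - 1350), mul_nonneg (mul_nonneg hq hq) (sub_nonneg.2 hp)]
  have hg : 0 ≤ 44 - 68*p^2 + 35*p^4 - 5*p^6 := by
    nlinarith [mul_nonneg (sub_nonneg.2 hp) (show 0 ≤ 38 - 30*p^2 + 5*p^4 by nlinarith)]
  refine abs_le_of_sq_le_sq ?_ hg
  have hs : √(12 - 3*p^2) ^ 2 = 12 - 3*p^2 := sq_sqrt (by linarith)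
  -- the difference of squares vanishes to second order at `p² = 1`, where `μ₂(-1) = μ₄(-1)`
  have key : (44 - 68*p^2 + 35*p^4 - 5*p^6) ^ 2 - p^2 * (12 - 3*p^2) * (7 - 5*p^2) ^ 2
      = (1 - p^2) ^ 2 * (1936 - 2700*p^2 + 1355*p^4 - 300*p^6 + 25*p^8) := by ring
  rw [mul_pow, mul_pow, hs]
  linarith [mul_nonneg (sq_nonneg (1 - p^2)) hQ]

lemma mu4_le_mu2 (h1 : -1 ≤ p) (h2 : p ≤ 1) : mu4 p ≤ mu2 p := by
  have hp : p ^ 2 ≤ 1 := by nlinarith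
  set s := √(12 - 3*p^2)
  have hs : s ^ 2 = 12 - 3*p^2 := sq_sqrt (by linarith)
  have hs3 : 3 ≤ s := le_sqrt_of_sq_le (by linarith)
  have hsq : (8*s + 7*p - 5*p^3) ^ 2 - (105*p^6-630*p^4+945*p^2+64)
      = 16 * (44 - 68*p^2 + 35*p^4 - 5*p^6 + p * s * (7 - 5*p^2)) := by
    linear_combination 64 * hs
  have hcross := (abs_le.1 (abs_mul_sqrt_le hp)).1
  have ht : √(105*p^6-630*p^4+945*p^2+64) ≤ 8*s + 7*p - 5*p^3 := by
    rw [sqrt_le_iff]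
    exact ⟨by nlinarith, by linarith⟩
  unfold mu2 mu4
  linarith

lemma mu3_le_mu5 (h1 : -1 ≤ p) (h2 : p ≤ 1) : mu3 p ≤ mu5 p := by
  have := mu4_le_mu2 (p := -p) (by linarith) (by linarith)
  rw [mu2_neg, mu4_neg] at this
  linarith

lemma mu4_sub_mu1 :
    mu4 p - mu1 p = 3 / 16 * (√(105*p^6-630*p^4+945*p^2+64) - (31*p - 5*p^3)) := by
  unfold mu1 mu4; ring

lemma disc_sub_sq :
    105*p^6-630*p^4+945*p^2+64 - (31*p - 5*p^3) ^ 2 = 16 * (1 - 5*p^4) * (4 - p^2) := by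
  ring

lemma mu1_le_mu4 (h1 : -1 ≤ p) (h : p ≤ p0) : mu1 p ≤ mu4 p := by
  suffices 31*p - 5*p^3 ≤ √(105*p^6-630*p^4+945*p^2+64) by linarith [mu4_sub_mu1 (p := p)]
  rcases le_total p 0 with hp | hp
  · nlinarith [sqrt_nonneg (105*p^6-630*p^4+945*p^2+64)]
  · have h5 := (le_p0_iff hp).1 h
    refine le_sqrt_of_sq_le ?_
    nlinarith [disc_sub_sq (p := p)]

lemma mu4_le_mu1 (h : p0 ≤ p) (h2 : p ≤ 1) : mu4 p ≤ mu1 p := by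
  suffices √(105*p^6-630*p^4+945*p^2+64) ≤ 31*p - 5*p^3 by linarith [mu4_sub_mu1 (p := p)]
  have hp : 0 ≤ p := p0_pos.le.trans h
  have h5 := (p0_le_iff hp).1 h
  have hp2 : p ^ 2 ≤ 1 := by nlinarith
  rw [sqrt_le_iff]
  constructor
  · nlinarith [mul_nonneg hp (show 0 ≤ 31 - 5*p^2 by linarith)]
  · nlinarith [disc_sub_sq (p := p), mul_nonneg (sub_nonneg.2 h5) (show 0 ≤ 4 - p^2 by linarith)]

lemma mu1_le_mu5 (h1 : -1 ≤ p) (h : p ≤ -p0) : mu1 p ≤ mu5 p := by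
  have := mu4_le_mu1 (p := -p) (by linarith) (by linarith)
  rw [mu1_neg, mu4_neg] at this
  linarith

lemma mu5_le_mu1 (h : -p0 ≤ p) (h2 : p ≤ 1) : mu5 p ≤ mu1 p := by
  have := mu1_le_mu4 (p := -p) (by linarith) (by linarith)
  rw [mu1_neg, mu4_neg] at this
  linarith

end Branches

section Sorting

variable {p : ℝ} {Λ : Fin 5 → ℝ}

lemma eq_of_le_neg_p0 (hΛ : Antitone Λ)
    (hperm : [mu1 p, mu2 p, mu3 p, mu4 p, mu5 p].Perm (List.ofFn Λ)) (h1 : -1 ≤ p)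
    (h : p ≤ -p0) : Λ = ![mu2 p, mu4 p, mu5 p, mu1 p, mu3 p] := by
  refine hΛ.eq_of_perm_ofFn ?_ (List.Perm.trans ?_ hperm).symm
  · simp [antitone_vecCons, mu4_le_mu2 h1 (by linarith [p0_pos]), mu5_le_mu4, mu1_le_mu5 h1 h,
      mu3_le_mu1 h1]
  · show List.Perm [mu2 p, mu4 p, mu5 p, mu1 p, mu3 p] _
    grind

lemma eq_of_mem_Icc_p0 (hΛ : Antitone Λ)
    (hperm : [mu1 p, mu2 p, mu3 p, mu4 p, mu5 p].Perm (List.ofFn Λ)) (h1 : -1 ≤ p) (h2 : p ≤ 1)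
    (h : -p0 ≤ p) (h' : p ≤ p0) : Λ = ![mu2 p, mu4 p, mu1 p, mu5 p, mu3 p] := by
  refine hΛ.eq_of_perm_ofFn ?_ (List.Perm.trans ?_ hperm).symm
  · simp [antitone_vecCons, mu4_le_mu2 h1 h2, mu1_le_mu4 h1 h', mu5_le_mu1 h h2, mu3_le_mu5 h1 h2]
  · show List.Perm [mu2 p, mu4 p, mu1 p, mu5 p, mu3 p] _
    grind

lemma eq_of_p0_le (hΛ : Antitone Λ)
    (hperm : [mu1 p, mu2 p, mu3 p, mu4 p, mu5 p].Perm (List.ofFn Λ)) (h2 : p ≤ 1)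
    (h : p0 ≤ p) : Λ = ![mu2 p, mu1 p, mu4 p, mu5 p, mu3 p] := by
  refine hΛ.eq_of_perm_ofFn ?_ (List.Perm.trans ?_ hperm).symm
  · have h1 : -1 ≤ p := by linarith [p0_pos]
    simp [antitone_vecCons, mu1_le_mu2 h2, mu4_le_mu1 h h2, mu5_le_mu4, mu3_le_mu5 h1 h2]
  · show List.Perm [mu2 p, mu1 p, mu4 p, mu5 p, mu3 p] _
    grind

end Sorting

/-- Ordering of the eigenvalue branches `μ₁, …, μ₅` on `[−1, 1]`: if
`Λ 0 ≥ Λ 1 ≥ … ≥ Λ 4` enumerates the values `μ₁(p), …, μ₅(p)` in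
non-increasing order, then the top and bottom values are always `μ₂(p)` and
`μ₃(p)`, while the middle ones switch branches at `±p₀`. -/
theorem mu_ordering (p : ℝ) (hp : p ∈ Set.Icc (-1:ℝ) 1)
    (Λ : Fin 5 → ℝ) (hΛanti : Antitone Λ)
    (hΛ : ({mu1 p, mu2 p, mu3 p, mu4 p, mu5 p} : Multiset ℝ) =
      Multiset.map Λ Finset.univ.val) :
    Λ 0 = mu2 p ∧ Λ 4 = mu3 p ∧
    (p ≤ p0 → Λ 1 = mu4 p) ∧ (p0 ≤ p → Λ 1 = mu1 p) ∧
    (p ≤ -p0 → Λ 2 = mu5 p) ∧ (-p0 ≤ p → p ≤ p0 → Λ 2 = mu1 p) ∧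
    (p0 ≤ p → Λ 2 = mu4 p) ∧
    (p ≤ -p0 → Λ 3 = mu1 p) ∧ (-p0 ≤ p → Λ 3 = mu5 p) := by
  obtain ⟨h1, h2⟩ := hp
  rw [Fin.univ_val_map] at hΛ
  have hperm := Multiset.coe_eq_coe.1 hΛ
  have low := fun h ↦ eq_of_le_neg_p0 hΛanti hperm h1 h
  have mid := fun h h' ↦ eq_of_mem_Icc_p0 hΛanti hperm h1 h2 h h'
  have high := fun h ↦ eq_of_p0_le hΛanti hperm h2 h
  have ends : Λ 0 = mu2 p ∧ Λ 4 = mu3 p := by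
    rcases le_total p (-p0) with h | h
    · simp [low h]
    rcases le_total p p0 with h' | h'
    · simp [mid h h']
    · simp [high h']
  refine ⟨ends.1, ends.2, fun h' ↦ ?_, fun h ↦ by simp [high h], fun h ↦ by simp [low h],
    fun h h' ↦ by simp [mid h h'], fun h ↦ by simp [high h], fun h ↦ by simp [low h], fun h ↦ ?_⟩
  · rcases le_total p (-p0) with h | h
    · simp [low h]
    · simp [mid h h']
  · rcases le_total p p0 with h' | h'
    · simp [mid h h']
    · simp [high h']
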